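/- arXiv:2312.10846 — 4 statements merged into one kernel-verified Lean document; each statement's English description precedes it below -/
import Mathlib

section
/- Let (X, Y) be a continuous biframe for H with respect to (Ω, μ). Then the continuous biframe operator S_{X,Y} is adjointable with adjoint S_{Y,X}; that is, ⟨S_{X,Y} f, g⟩ = ⟨f, S_{Y,X} g⟩ for all f, g ∈ H. -/
/-!
Pairing with a fixed vector, `x ↦ ⟨x, y⟩` or `x ↦ ⟨y, x⟩`, is additive and, by the Cauchy–Schwarz
inequality `‖⟨x, y⟩‖ ≤ ‖x‖ ‖y‖`, bounded; hence it is a continuous `ℝ`-linear map and commutes with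
Bochner integrals. Both `⟨S_{X,Y} f, g⟩` and `⟨f, S_{Y,X} g⟩` therefore equal
`∫ ⟨f, X ω⟩ ⟨Y ω, g⟩ dμ`.

Cauchy–Schwarz rests on the order theory of C⋆-algebras (`a ≤ ‖a‖ • 1` for `a ≥ 0`, monotonicity of
the norm on positive elements), which needs a conjugate-linear star. Conjugate-linearity is not
assumed, but it is forced by the positivity of `star a * a`.
-/

section CStarRing

variable {𝒜 : Type*} [NormedRing 𝒜] [StarRing 𝒜] [CStarRing 𝒜] [NormedAlgebra ℂ 𝒜]
  [PartialOrder 𝒜] [StarOrderedRing 𝒜]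

/-- For `s := star (I • 1) + I • 1`, the positive element `s * s` satisfies
`(s * s)² = -4 (s * s)`, so `s * s = 0` and `s = 0`. -/
theorem star_I_smul_one : star (Complex.I • (1 : 𝒜)) = -(Complex.I • 1) := by
  set u := star (Complex.I • (1 : 𝒜)) with hu_def
  have hu : u * u = -1 := by
    rw [hu_def, ← star_mul, smul_mul_smul_comm, Complex.I_mul_I, one_mul, neg_one_smul, star_neg,
      star_one]
  set w := Complex.I • u - 1 with hw_def
  have hw : w * w = -(w + w) := by
    rw [hw_def, sub_mul, mul_sub, mul_sub, smul_mul_smul_comm, Complex.I_mul_I, hu, neg_one_smul,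
      neg_neg, mul_one, one_mul, one_mul]
    abel
  set s := u + Complex.I • 1 with hs_def
  have hs : star s = s := by rw [hs_def, star_add, star_star, add_comm]
  have hss : s * s = w + w := by
    rw [hs_def, hw_def, add_mul, mul_add, mul_add, hu, mul_smul_comm, smul_mul_assoc,
      smul_mul_smul_comm, Complex.I_mul_I, mul_one, one_mul, mul_one, neg_one_smul]
    abel
  have hww : (s * s) * (s * s) = -(s * s + s * s + s * s + s * s) := by
    rw [hss, add_mul, mul_add, hw]
    abel
  have hss_nonneg : 0 ≤ s * s := by simpa [hs] using star_mul_self_nonneg s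
  have hss_nonpos : s * s ≤ 0 := by
    calc s * s ≤ s * s + s * s + s * s + s * s := by
          simp only [add_assoc, le_add_iff_nonneg_right]; positivity
      _ = -((s * s) * (s * s)) := by rw [hww, neg_neg]
      _ ≤ 0 := neg_nonpos.2 (by simpa [hs] using star_mul_self_nonneg (s * s))
  have : s = 0 :=
    (CStarRing.star_mul_self_eq_zero_iff s).1 (by rw [hs]; exact le_antisymm hss_nonpos hss_nonneg)
  exact eq_neg_of_add_eq_zero_left this

theorem star_complex_smul (z : ℂ) (a : 𝒜) : star (z • a) = star z • star a := by
  have star_ofReal_smul : ∀ (r : ℝ) (b : 𝒜), star ((r : ℂ) • b) = (r : ℂ) • star b := fun r b => by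
    rw [Complex.coe_smul, Complex.coe_smul]
    exact map_real_smul (starAddEquiv (R := 𝒜)) continuous_star r b
  have hz : z • (1 : 𝒜) = (z.re : ℂ) • 1 + (z.im : ℂ) • (Complex.I • 1) := by
    rw [smul_smul, ← add_smul, Complex.re_add_im]
  have hz' : star z • (1 : 𝒜) = (z.re : ℂ) • 1 - (z.im : ℂ) • (Complex.I • 1) := by
    rw [smul_smul, ← sub_smul]
    congr 1
    apply Complex.ext <;> simp
  rw [← smul_one_mul, star_mul, hz, star_add, star_ofReal_smul, star_ofReal_smul, star_one,
    star_I_smul_one, smul_neg, ← sub_eq_add_neg, ← hz', mul_smul_one]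

variable (𝒜) in
abbrev CStarRing.toCStarAlgebra [CompleteSpace 𝒜] : CStarAlgebra 𝒜 :=
  letI : StarModule ℂ 𝒜 := ⟨star_complex_smul⟩
  { ‹NormedRing 𝒜›, ‹StarRing 𝒜›, ‹CStarRing 𝒜›, ‹CompleteSpace 𝒜›, ‹NormedAlgebra ℂ 𝒜›,
    ‹StarModule ℂ 𝒜› with }

end CStarRing

open MeasureTheory

theorem AddMonoidHom.integral_comp_comm_of_bound {E F Ω : Type*} [NormedAddCommGroup E]
    [NormedSpace ℝ E] [CompleteSpace E] [NormedAddCommGroup F] [NormedSpace ℝ F] [CompleteSpace F]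
    [MeasurableSpace Ω] {μ : Measure Ω} (L : E →+ F) {C : ℝ} (hL : ∀ x, ‖L x‖ ≤ C * ‖x‖)
    {φ : Ω → E} (hφ : Integrable φ μ) : ∫ ω, L (φ ω) ∂μ = L (∫ ω, φ ω ∂μ) :=
  (L.toRealLinearMap (AddMonoidHomClass.continuous_of_bound L C hL)).integral_comp_comm hφ

/-- Linear in the first argument for a left action, unlike Mathlib's `CStarModule`. -/
structure IsCStarInnerProduct {𝒜 H : Type*} [NormedRing 𝒜] [StarRing 𝒜] [PartialOrder 𝒜]
    [Norm H] [AddCommGroup H] [Module 𝒜 H] (inn : H → H → 𝒜) : Prop where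
  add_left : ∀ x y z : H, inn (x + y) z = inn x z + inn y z
  smul_left : ∀ (a : 𝒜) (x z : H), inn (a • x) z = a * inn x z
  conj_symm : ∀ x y : H, inn x y = star (inn y x)
  nonneg : ∀ x : H, 0 ≤ inn x x
  norm_eq_sqrt : ∀ x : H, ‖x‖ = √‖inn x x‖

namespace IsCStarInnerProduct

variable {𝒜 H : Type*} [CStarAlgebra 𝒜] [PartialOrder 𝒜]
  [NormedAddCommGroup H] [Module 𝒜 H] {inn : H → H → 𝒜} (h : IsCStarInnerProduct inn)
include h

def addMonoidHomLeft (y : H) : H →+ 𝒜 :=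
  AddMonoidHom.mk' (inn · y) (h.add_left · · y)

theorem add_right (x y z : H) : inn x (y + z) = inn x y + inn x z := by
  rw [h.conj_symm, h.add_left, star_add, ← h.conj_symm, ← h.conj_symm]

def addMonoidHomRight (x : H) : H →+ 𝒜 :=
  AddMonoidHom.mk' (inn x ·) (h.add_right x)

theorem sub_left (x y z : H) : inn (x - y) z = inn x z - inn y z :=
  (h.addMonoidHomLeft z).map_sub x y

theorem sub_right (x y z : H) : inn x (y - z) = inn x y - inn x z :=
  (h.addMonoidHomRight x).map_sub y z

theorem smul_right (a : 𝒜) (x y : H) : inn x (a • y) = inn x y * star a := by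
  rw [h.conj_symm, h.smul_left, star_mul, ← h.conj_symm]

theorem eq_zero_of_inner_self_eq_zero {y : H} (hy : inn y y = 0) : y = 0 := by
  rw [← norm_eq_zero, h.norm_eq_sqrt, hy, norm_zero, Real.sqrt_zero]

variable [StarOrderedRing 𝒜]

theorem inner_mul_star_le (x y : H) : inn x y * star (inn x y) ≤ ‖inn y y‖ • inn x x := by
  set c := inn x y with hc_def
  set N := ‖inn y y‖
  rcases (norm_nonneg (inn y y)).eq_or_lt with hN | hN
  · have hc : c = 0 := by
      rw [hc_def, h.eq_zero_of_inner_self_eq_zero (norm_eq_zero.1 hN.symm)]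
      exact (h.addMonoidHomRight x).map_zero
    simpa [hc] using smul_nonneg (norm_nonneg _) (h.nonneg x)
  have expand : ∀ a : 𝒜, 0 ≤ inn x x - c * star a - a * star c + N • (a * star a) := fun a =>
    calc (0 : 𝒜) ≤ inn (x - a • y) (x - a • y) := h.nonneg _
      _ = inn x x - c * star a - a * star c + a * inn y y * star a := by
          rw [h.sub_left, h.sub_right, h.sub_right, h.smul_right, h.smul_right, h.smul_left,
            h.smul_left, h.conj_symm y x]
          abel
      _ ≤ _ := by
          gcongr
          exact CStarAlgebra.star_right_conjugate_le_norm_smul (h.nonneg y).isSelfAdjoint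
  have key : 0 ≤ inn x x - N⁻¹ • (c * star c) := by
    convert expand (N⁻¹ • c) using 1
    simp only [star_smul, star_trivial, mul_smul_comm, smul_mul_assoc, smul_smul]
    rw [show N * (N⁻¹ * N⁻¹) = N⁻¹ by field_simp]
    abel
  calc c * star c = N • N⁻¹ • (c * star c) := by rw [smul_smul, mul_inv_cancel₀ hN.ne', one_smul]
    _ ≤ N • inn x x := smul_le_smul_of_nonneg_left (sub_nonneg.1 key) hN.le

theorem norm_inner_le (x y : H) : ‖inn x y‖ ≤ ‖x‖ * ‖y‖ := by
  have hsq : ‖inn x y‖ ^ 2 ≤ (‖x‖ * ‖y‖) ^ 2 :=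
    calc ‖inn x y‖ ^ 2 = ‖inn x y * star (inn x y)‖ := by rw [CStarRing.norm_self_mul_star, sq]
      _ ≤ ‖‖inn y y‖ • inn x x‖ :=
          CStarAlgebra.norm_le_norm_of_nonneg_of_le (mul_star_self_nonneg _)
            (h.inner_mul_star_le x y)
      _ = (‖x‖ * ‖y‖) ^ 2 := by
          rw [norm_smul, norm_norm, mul_pow, h.norm_eq_sqrt x, h.norm_eq_sqrt y,
            Real.sq_sqrt (norm_nonneg _), Real.sq_sqrt (norm_nonneg _), mul_comm]
  exact (pow_le_pow_iff_left₀ (norm_nonneg _) (by positivity) two_ne_zero).1 hsq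

theorem integral_left {Ω : Type*} [MeasurableSpace Ω] {μ : Measure Ω} [NormedSpace ℝ H]
    [CompleteSpace H] {φ : Ω → H} (hφ : Integrable φ μ) (y : H) :
    inn (∫ ω, φ ω ∂μ) y = ∫ ω, inn (φ ω) y ∂μ :=
  ((h.addMonoidHomLeft y).integral_comp_comm_of_bound (C := ‖y‖)
    (fun x => (h.norm_inner_le x y).trans_eq (mul_comm _ _)) hφ).symm

theorem integral_right {Ω : Type*} [MeasurableSpace Ω] {μ : Measure Ω} [NormedSpace ℝ H]
    [CompleteSpace H] {φ : Ω → H} (hφ : Integrable φ μ) (x : H) :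
    inn x (∫ ω, φ ω ∂μ) = ∫ ω, inn x (φ ω) ∂μ :=
  ((h.addMonoidHomRight x).integral_comp_comm_of_bound (C := ‖x‖) (h.norm_inner_le x) hφ).symm

end IsCStarInnerProduct

theorem continuous_biframe_operator_adjoint_general
    {𝒜 H Ω : Type*}
    -- `𝒜` is a unital C*-algebra
    [NormedRing 𝒜] [StarRing 𝒜] [CStarRing 𝒜] [NormedAlgebra ℂ 𝒜] [CompleteSpace 𝒜]
    [PartialOrder 𝒜] [StarOrderedRing 𝒜]
    -- `H` is a Hilbert C*-module over `𝒜`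
    [NormedAddCommGroup H] [NormedSpace ℝ H] [CompleteSpace H] [Module 𝒜 H]
    (inn : H → H → 𝒜)
    (inn_add_left : ∀ x y z : H, inn (x + y) z = inn x z + inn y z)
    (inn_smul_left : ∀ (a : 𝒜) (x z : H), inn (a • x) z = a * inn x z)
    (inn_conj_symm : ∀ x y : H, inn x y = star (inn y x))
    (inn_nonneg : ∀ x : H, 0 ≤ inn x x)
    (hnorm : ∀ x : H, ‖x‖ = Real.sqrt ‖inn x x‖)
    -- `(Ω, μ)` is a measure space
    [MeasurableSpace Ω] (μ : Measure Ω)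
    (X Y : Ω → H)
    -- all relevant integrands are Bochner integrable
    (hXYint : ∀ f : H, Integrable (fun ω => inn f (X ω) • Y ω) μ)
    (hYXint : ∀ f : H, Integrable (fun ω => inn f (Y ω) • X ω) μ)
    -- the continuous biframe operators `S_{X,Y}` and `S_{Y,X}`
    (SXY SYX : H → H)
    (hSXY : ∀ f : H, SXY f = ∫ ω, inn f (X ω) • Y ω ∂μ)
    (hSYX : ∀ f : H, SYX f = ∫ ω, inn f (Y ω) • X ω ∂μ) :
    ∀ f g : H, inn (SXY f) g = inn f (SYX g) := by
  let := CStarRing.toCStarAlgebra 𝒜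
  have h : IsCStarInnerProduct inn :=
    ⟨inn_add_left, inn_smul_left, inn_conj_symm, inn_nonneg, hnorm⟩
  intro f g
  rw [hSXY, hSYX, h.integral_left (hXYint f), h.integral_right (hYXint g)]
  simp only [h.smul_left, h.smul_right, ← h.conj_symm]

/-- If `(X, Y)` is a continuous biframe for a Hilbert C*-module `H`
over a unital C*-algebra `𝒜`, then the continuous biframe operator `S_{X,Y}` is
adjointable with adjoint `S_{Y,X}`: `⟨S_{X,Y} f, g⟩ = ⟨f, S_{Y,X} g⟩` for all `f, g`. -/
theorem continuous_biframe_operator_adjoint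
    {𝒜 H Ω : Type*}
    -- `𝒜` is a unital C*-algebra
    [NormedRing 𝒜] [StarRing 𝒜] [CStarRing 𝒜] [NormedAlgebra ℂ 𝒜] [CompleteSpace 𝒜]
    [PartialOrder 𝒜] [StarOrderedRing 𝒜]
    -- `H` is a Hilbert C*-module over `𝒜`
    [NormedAddCommGroup H] [NormedSpace ℝ H] [CompleteSpace H] [Module 𝒜 H]
    (inn : H → H → 𝒜)
    (inn_add_left : ∀ x y z : H, inn (x + y) z = inn x z + inn y z)
    (inn_smul_left : ∀ (a : 𝒜) (x z : H), inn (a • x) z = a * inn x z)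
    (inn_conj_symm : ∀ x y : H, inn x y = star (inn y x))
    (inn_nonneg : ∀ x : H, 0 ≤ inn x x)
    (inn_definite : ∀ x : H, inn x x = 0 → x = 0)
    (hnorm : ∀ x : H, ‖x‖ = Real.sqrt ‖inn x x‖)
    -- `(Ω, μ)` is a measure space
    [MeasurableSpace Ω] (μ : Measure Ω)
    -- `X, Y : Ω → H` are weakly measurable
    (X Y : Ω → H)
    (hXw : ∀ f : H, AEStronglyMeasurable (fun ω => inn f (X ω)) μ)
    (hYw : ∀ f : H, AEStronglyMeasurable (fun ω => inn f (Y ω)) μ)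
    -- `(X, Y)` is a continuous biframe with bounds `0 < A ≤ B`
    (A B : ℝ) (hA : 0 < A) (hAB : A ≤ B)
    (hframe : ∀ f : H,
      A • inn f f ≤ ∫ ω, inn f (X ω) * inn (Y ω) f ∂μ ∧
      ∫ ω, inn f (X ω) * inn (Y ω) f ∂μ ≤ B • inn f f)
    -- all relevant integrands are Bochner integrable
    (hXYint : ∀ f : H, Integrable (fun ω => inn f (X ω) • Y ω) μ)
    (hYXint : ∀ f : H, Integrable (fun ω => inn f (Y ω) • X ω) μ)
    (hprod : ∀ f g : H, Integrable (fun ω => inn f (X ω) * inn (Y ω) g) μ)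
    -- the continuous biframe operators `S_{X,Y}` and `S_{Y,X}`
    (SXY SYX : H → H)
    (hSXY : ∀ f : H, SXY f = ∫ ω, inn f (X ω) • Y ω ∂μ)
    (hSYX : ∀ f : H, SYX f = ∫ ω, inn f (Y ω) • X ω ∂μ) :
    ∀ f g : H, inn (SXY f) g = inn f (SYX g) :=
  continuous_biframe_operator_adjoint_general inn inn_add_left inn_smul_left inn_conj_symm
    inn_nonneg hnorm μ X Y hXYint hYXint SXY SYX hSXY hSYX
end

section
/- Let T : H → H be a bounded, adjointable, 𝒜-linear operator that is invertible with bounded adjointable inverse. If (X, Y) is a continuous biframe for H with bounds A and B, then (T∘X, T∘Y) is a continuous biframe for H with bounds A·‖(T⁻¹)*‖⁻² and B·‖T*‖²; that is, for all f ∈ H, A·‖(T⁻¹)*‖⁻²·⟨f,f⟩ ≤ ∫_Ω ⟨f, T X(ω)⟩⟨T Y(ω), f⟩ dμ(ω) ≤ B·‖T*‖²·⟨f,f⟩. -/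
open MeasureTheory Filter Topology

/-!
Put `g = T* f`. By adjointness the frame integrand of `(T ∘ X, T ∘ Y)` at `f` is that of `(X, Y)`
at `g`, so it suffices to compare `⟨g, g⟩` with `⟨f, f⟩`: we have `⟨T* f, T* f⟩ ≤ ‖T*‖² ⟨f, f⟩`
and, as `f = (T⁻¹)* g`, `⟨f, f⟩ ≤ ‖(T⁻¹)*‖² ⟨g, g⟩`.

The operator inequality `⟨S x, S x⟩ ≤ ‖S‖² ⟨x, x⟩` reduces to `⟨M x, x⟩ ≤ ⟨x, x⟩` for the
self-adjoint `M = S* S / ‖S* S‖`, of norm at most one. For `b k = ⟨M^k x, x⟩`, positivity of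
`⟨M^k x - x, M^k x - x⟩` gives `2 b k ≤ b (2 k) + b 0`, hence
`2^n (b 1 - b 0) ≤ b (2^n) ≤ ‖x‖²` for every `n`, and so `b 1 ≤ b 0`.
-/

namespace CStarRing

variable {𝒜 : Type*} [NormedRing 𝒜] [StarRing 𝒜] [CStarRing 𝒜] [NormedAlgebra ℂ 𝒜]
  [PartialOrder 𝒜] [StarOrderedRing 𝒜]

-- This needs the order: `ℂ` with the trivial involution is a `CStarRing` and a normed `ℂ`-algebra.
lemma star_I_smul_one : star (Complex.I • (1 : 𝒜)) = -(Complex.I • 1) := by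
  set u : 𝒜 := Complex.I • 1
  set w : 𝒜 := star u
  have hu_comm : w * u = u * w := by simp only [u, smul_mul_assoc, mul_smul_comm, one_mul, mul_one]
  have huu : u * u = -1 := by simp [u, smul_smul]
  have hww : w * w = -1 := by simpa [w] using congrArg star huu
  have hvv : u * w * (u * w) = 1 := by
    calc u * w * (u * w) = u * (w * u) * w := by noncomm_ring
      _ = (u * u) * (w * w) := by rw [hu_comm]; noncomm_ring
      _ = 1 := by rw [huu, hww]; noncomm_ring
  set v := u * w
  have hv_nonneg : 0 ≤ v := by
    simpa only [v, w, star_star] using star_mul_self_nonneg w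
  set z := 1 - v
  have hz_sa : star z = z := by simp [z, v, w, star_mul]
  -- `v` is positive and `v * v = 1`, so `z * v * z = -(z * z)` is both positive and negative.
  have hzvz : z * v * z = -(star z * z) := by
    rw [hz_sa, eq_neg_iff_add_eq_zero]
    calc z * v * z + z * z = z * (1 - v * v) := by simp only [z]; noncomm_ring
      _ = 0 := by rw [hvv, sub_self, mul_zero]
  have hzz : star z * z = 0 := by
    refine le_antisymm ?_ (star_mul_self_nonneg z)
    simpa [hzvz, hz_sa] using star_left_conjugate_nonneg hv_nonneg z
  have huw : u * w = 1 := sub_eq_zero.mp ((CStarRing.star_mul_self_eq_zero_iff z).mp hzz) |>.symm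
  calc w = -(u * u) * w := by rw [huu, neg_neg, one_mul]
    _ = -u := by rw [neg_mul, mul_assoc, huw, mul_one]

-- `c ↦ star (c • 1) - conj c • 1` is additive and continuous, hence `ℝ`-linear; it vanishes at `1`
-- and at `I`.
lemma starModule_complex : StarModule ℂ 𝒜 := by
  let φ : ℂ →+ 𝒜 :=
    { toFun := fun c => star (c • (1 : 𝒜)) - starRingEnd ℂ c • 1
      map_zero' := by simp
      map_add' := fun c d => by simp only [add_smul, star_add, map_add]; abel }
  have hφ : Continuous φ := by
    refine (continuous_star.comp (continuous_id.smul continuous_const)).sub ?_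
    exact Complex.continuous_conj.smul continuous_const
  have hφ_zero (c : ℂ) : φ c = 0 := by
    have hc : c = c.re • (1 : ℂ) + c.im • Complex.I := by simp
    change φ.toRealLinearMap hφ c = 0
    rw [hc, map_add, map_smul, map_smul]
    simp [φ, star_I_smul_one]
  refine ⟨fun c a => ?_⟩
  calc star (c • a)
      = star a * star (c • (1 : 𝒜)) := by rw [← star_mul, smul_mul_assoc, one_mul]
    _ = star a * (starRingEnd ℂ c • 1) := by rw [← sub_eq_zero.mp (hφ_zero c)]
    _ = starRingEnd ℂ c • star a := by rw [mul_smul_comm, mul_one]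

abbrev toCStarAlgebra_s3 [CompleteSpace 𝒜] : CStarAlgebra 𝒜 :=
  letI := starModule_complex (𝒜 := 𝒜)
  {}

end CStarRing

lemma div_smul_le_smul_of_le_smul {β : Type*} [AddCommGroup β] [Module ℝ β] [PartialOrder β]
    [PosSMulMono ℝ β] {a b : β} {A c : ℝ} (hA : 0 ≤ A) (hc : 0 ≤ c) (hb : 0 ≤ b)
    (h : a ≤ c • b) : (A / c) • a ≤ A • b := by
  rcases hc.eq_or_lt with rfl | hc
  · simpa using smul_nonneg hA hb
  · calc (A / c) • a ≤ (A / c) • c • b := smul_le_smul_of_nonneg_left h (by positivity)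
      _ = A • b := by rw [smul_smul, div_mul_cancel₀ A hc.ne']

lemma norm_pow_apply_le_of_norm_le_one {𝕜 E : Type*} [NontriviallyNormedField 𝕜]
    [SeminormedAddCommGroup E] [NormedSpace 𝕜 E] {M : E →L[𝕜] E} (hM : ‖M‖ ≤ 1) (k : ℕ) (x : E) :
    ‖(M ^ k) x‖ ≤ ‖x‖ := by
  induction k with
  | zero => rfl
  | succ k ih =>
    rw [pow_succ', mul_apply_eq_comp]
    exact (M.le_of_opNorm_le hM _).trans ((one_mul _).trans_le ih)

lemma inn_pow_apply_eq {H α : Type*} [NormedAddCommGroup H] [NormedSpace ℝ H]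
    {inn : H → H → α} {M : H →L[ℝ] H} (hM : ∀ x y, inn (M x) y = inn x (M y)) (k : ℕ) (u v : H) :
    inn ((M ^ k) u) v = inn u ((M ^ k) v) := by
  induction k generalizing u v with
  | zero => rfl
  | succ k ih =>
    rw [pow_succ, mul_apply_eq_comp, ih, hM, ← mul_apply_eq_comp, ← pow_succ', pow_succ]

section CStarAlgebra

variable {𝒜 : Type*} [CStarAlgebra 𝒜] [PartialOrder 𝒜]

lemma nonpos_of_forall_smul_le_smul_one [StarOrderedRing 𝒜] {a : 𝒜} {C : ℝ} {r : ℕ → ℝ}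
    (hr : Tendsto r atTop atTop) (h : ∀ n, r n • a ≤ C • 1) : a ≤ 0 := by
  have hlim : Tendsto (fun n => (r n)⁻¹ • C • (1 : 𝒜)) atTop (𝓝 0) := by
    simpa using hr.inv_tendsto_atTop.smul_const (C • (1 : 𝒜))
  refine ge_of_tendsto hlim ((hr.eventually_gt_atTop 0).mono fun n hn => ?_)
  calc a = (r n)⁻¹ • r n • a := by rw [inv_smul_smul₀ hn.ne']
    _ ≤ (r n)⁻¹ • C • 1 := smul_le_smul_of_nonneg_left (h n) (inv_nonneg.mpr hn.le)

variable {H : Type*} [NormedAddCommGroup H] [Module 𝒜 H]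

structure IsCStarInner (inn : H → H → 𝒜) : Prop where
  add_left : ∀ x y z : H, inn (x + y) z = inn x z + inn y z
  smul_left : ∀ (a : 𝒜) (x z : H), inn (a • x) z = a * inn x z
  conj_symm : ∀ x y : H, inn x y = star (inn y x)
  nonneg : ∀ x : H, 0 ≤ inn x x
  norm_eq : ∀ x : H, ‖x‖ = √‖inn x x‖

namespace IsCStarInner

variable {inn : H → H → 𝒜}

def innLeft (h : IsCStarInner inn) (z : H) : H →+ 𝒜 :=
  AddMonoidHom.mk' (inn · z) (h.add_left · · z)

lemma inn_zero_left (h : IsCStarInner inn) (z : H) : inn 0 z = 0 := (h.innLeft z).map_zero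

lemma inn_sub_left (h : IsCStarInner inn) (x y z : H) : inn (x - y) z = inn x z - inn y z :=
  (h.innLeft z).map_sub x y

lemma inn_sub_right (h : IsCStarInner inn) (x y z : H) : inn x (y - z) = inn x y - inn x z := by
  rw [h.conj_symm, h.inn_sub_left, star_sub, ← h.conj_symm, ← h.conj_symm]

lemma inn_self_eq_zero (h : IsCStarInner inn) {x : H} : inn x x = 0 ↔ x = 0 := by
  refine ⟨fun hx => ?_, fun hx => hx ▸ h.inn_zero_left 0⟩
  rw [← norm_eq_zero, h.norm_eq, hx, norm_zero, Real.sqrt_zero]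

lemma eq_of_forall_inn_eq (h : IsCStarInner inn) {x y : H} (hxy : ∀ z, inn z x = inn z y) :
    x = y :=
  sub_eq_zero.mp (h.inn_self_eq_zero.mp (by rw [h.inn_sub_right, hxy, sub_self]))

lemma leftInverse_adjoint (h : IsCStarInner inn) {T T' R R' : H → H}
    (hT : ∀ x y, inn (T x) y = inn x (T' y)) (hR : ∀ x y, inn (R x) y = inn x (R' y))
    (hTR : Function.LeftInverse T R) : Function.LeftInverse R' T' := fun x =>
  h.eq_of_forall_inn_eq fun z => by rw [← hR, ← hT, hTR]

variable [StarOrderedRing 𝒜]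

lemma add_swap_le (h : IsCStarInner inn) (x y : H) : inn x y + inn y x ≤ inn x x + inn y y := by
  have := h.nonneg (x - y)
  rw [h.inn_sub_left, h.inn_sub_right, h.inn_sub_right] at this
  rw [← sub_nonneg]
  convert this using 1
  abel

-- Mathlib's `CStarModule` inner product is linear in the second variable, whence the swap.
lemma norm_inn_le (h : IsCStarInner inn) (x y : H) : ‖inn x y‖ ≤ ‖x‖ * ‖y‖ := by
  let _ : Module ℂ H := Module.compHom H (algebraMap ℂ 𝒜)
  let _ : CStarModule 𝒜 H :=
    { inner := fun x y => inn y x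
      inner_add_right := h.add_left _ _ _
      inner_self_nonneg := h.nonneg _
      inner_self := h.inn_self_eq_zero
      inner_op_smul_right := h.smul_left _ _ _
      inner_smul_right_complex := by
        intro z x y
        exact (h.smul_left _ _ _).trans (Algebra.smul_def z _).symm
      star_inner := fun x y => (h.conj_symm x y).symm
      norm_eq_sqrt_norm_inner_self := h.norm_eq }
  exact (CStarModule.norm_inner_le H (x := y) (y := x)).trans_eq (mul_comm _ _)

section Operators

variable [NormedSpace ℝ H]

-- `inn · z` is additive and, by Cauchy–Schwarz, continuous, hence `ℝ`-linear.
lemma inn_real_smul_left (h : IsCStarInner inn) (r : ℝ) (x z : H) :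
    inn (r • x) z = r • inn x z := by
  have hcont : Continuous (h.innLeft z) :=
    AddMonoidHomClass.continuous_of_bound _ ‖z‖ fun x => (h.norm_inn_le x z).trans_eq (mul_comm _ _)
  exact ((h.innLeft z).toRealLinearMap hcont).map_smul r x

lemma inn_real_smul_right (h : IsCStarInner inn) (r : ℝ) (x z : H) :
    inn x (r • z) = r • inn x z := by
  rw [h.conj_symm, h.inn_real_smul_left, star_smul, star_trivial, ← h.conj_symm]

lemma inn_apply_self_le_of_norm_le_one (h : IsCStarInner inn) {M : H →L[ℝ] H}
    (hM : ∀ x y, inn (M x) y = inn x (M y)) (hM1 : ‖M‖ ≤ 1) (x : H) :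
    inn (M x) x ≤ inn x x := by
  set b : ℕ → 𝒜 := fun k => inn ((M ^ k) x) x
  have hdouble (k : ℕ) : b k + b k ≤ b (2 * k) + b 0 := by
    have := h.add_swap_le ((M ^ k) x) x
    rwa [← inn_pow_apply_eq hM k x x, ← inn_pow_apply_eq hM k ((M ^ k) x) x,
      ← mul_apply_eq_comp, ← pow_add, ← two_mul k] at this
  have hdyadic (n : ℕ) : (2 : ℝ) ^ n • (b 1 - b 0) ≤ b (2 ^ n) - b 0 := by
    induction n with
    | zero => simp
    | succ n ih =>
      calc (2 : ℝ) ^ (n + 1) • (b 1 - b 0) = (2 : ℝ) • (2 : ℝ) ^ n • (b 1 - b 0) := by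
            rw [pow_succ', mul_smul]
        _ ≤ (2 : ℝ) • (b (2 ^ n) - b 0) := smul_le_smul_of_nonneg_left ih zero_le_two
        _ ≤ b (2 ^ (n + 1)) - b 0 := by
            have := sub_le_sub_right (hdouble (2 ^ n)) (b 0 + b 0)
            rw [← pow_succ'] at this
            rw [two_smul]
            convert this using 1 <;> abel
  have hbound (k : ℕ) : b k ≤ ‖x‖ ^ 2 • 1 := by
    have hsa : IsSelfAdjoint (b k) := by
      rw [IsSelfAdjoint, ← h.conj_symm, ← inn_pow_apply_eq hM]
    calc b k ≤ algebraMap ℝ 𝒜 ‖b k‖ := hsa.le_algebraMap_norm_self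
      _ = ‖b k‖ • 1 := Algebra.algebraMap_eq_smul_one _
      _ ≤ ‖x‖ ^ 2 • 1 := by
        refine smul_le_smul_of_nonneg_right ?_ zero_le_one
        calc ‖b k‖ ≤ ‖(M ^ k) x‖ * ‖x‖ := h.norm_inn_le _ _
          _ ≤ ‖x‖ ^ 2 := by rw [sq]; gcongr; exact norm_pow_apply_le_of_norm_le_one hM1 k x
  have hb1 : b 1 - b 0 ≤ 0 := by
    refine nonpos_of_forall_smul_le_smul_one (C := ‖x‖ ^ 2)
      (tendsto_pow_atTop_atTop_of_one_lt one_lt_two) fun n => ?_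
    exact (hdyadic n).trans ((sub_le_self _ (h.nonneg x)).trans (hbound _))
  simpa [b] using hb1

lemma inn_apply_self_le (h : IsCStarInner inn) {M : H →L[ℝ] H}
    (hM : ∀ x y, inn (M x) y = inn x (M y)) (x : H) : inn (M x) x ≤ ‖M‖ • inn x x := by
  rcases (norm_nonneg M).eq_or_lt with hM0 | hM0
  · simp [norm_eq_zero.mp hM0.symm, h.inn_zero_left]
  set M' := ‖M‖⁻¹ • M
  have hM' : ∀ x y, inn (M' x) y = inn x (M' y) := fun x y => by
    simp only [M', smul_apply, h.inn_real_smul_left, h.inn_real_smul_right, hM]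
  have hM'1 : ‖M'‖ ≤ 1 := by
    rw [norm_smul, norm_inv, norm_norm, inv_mul_cancel₀ hM0.ne']
  calc inn (M x) x = ‖M‖ • inn (M' x) x := by
        rw [smul_apply, h.inn_real_smul_left, smul_smul,
          mul_inv_cancel₀ hM0.ne', one_smul]
    _ ≤ ‖M‖ • inn x x :=
        smul_le_smul_of_nonneg_left (h.inn_apply_self_le_of_norm_le_one hM' hM'1 x) hM0.le

lemma norm_le_of_adjoint (h : IsCStarInner inn) {S S' : H →L[ℝ] H}
    (hadj : ∀ x y, inn (S' x) y = inn x (S y)) : ‖S'‖ ≤ ‖S‖ := by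
  refine S'.opNorm_le_bound (norm_nonneg S) fun x => ?_
  rcases (norm_nonneg (S' x)).eq_or_lt with h0 | hpos
  · rw [← h0]; positivity
  refine le_of_mul_le_mul_right ?_ hpos
  calc ‖S' x‖ * ‖S' x‖ = ‖inn x (S (S' x))‖ := by
        rw [← hadj, ← sq, h.norm_eq, Real.sq_sqrt (norm_nonneg _)]
    _ ≤ ‖x‖ * (‖S‖ * ‖S' x‖) := (h.norm_inn_le _ _).trans (by gcongr; exact S.le_opNorm _)
    _ = ‖S‖ * ‖x‖ * ‖S' x‖ := by ring

lemma inn_map_self_le (h : IsCStarInner inn) {S S' : H →L[ℝ] H}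
    (hadj : ∀ x y, inn (S' x) y = inn x (S y)) (x : H) :
    inn (S x) (S x) ≤ ‖S‖ ^ 2 • inn x x := by
  have hM : ∀ u v, inn ((S' ∘L S) u) v = inn u ((S' ∘L S) v) := fun u v => by
    rw [ContinuousLinearMap.comp_apply, ContinuousLinearMap.comp_apply, hadj, h.conj_symm u,
      hadj, ← h.conj_symm]
  calc inn (S x) (S x) = inn ((S' ∘L S) x) x := (hadj _ _).symm
    _ ≤ ‖S' ∘L S‖ • inn x x := h.inn_apply_self_le hM x
    _ ≤ ‖S‖ ^ 2 • inn x x := by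
        refine smul_le_smul_of_nonneg_right ?_ (h.nonneg x)
        calc ‖S' ∘L S‖ ≤ ‖S'‖ * ‖S‖ := S'.opNorm_comp_le S
          _ ≤ ‖S‖ ^ 2 := by rw [sq]; gcongr; exact h.norm_le_of_adjoint hadj

end Operators

end IsCStarInner

end CStarAlgebra

theorem continuous_biframe_map_invertible_general
    {𝒜 H Ω : Type*}
    -- `𝒜` is a unital C*-algebra
    [NormedRing 𝒜] [StarRing 𝒜] [CStarRing 𝒜] [NormedAlgebra ℂ 𝒜] [CompleteSpace 𝒜]
    [PartialOrder 𝒜] [StarOrderedRing 𝒜]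
    -- `H` is a Hilbert C*-module over `𝒜`
    [NormedAddCommGroup H] [NormedSpace ℝ H] [Module 𝒜 H]
    (inn : H → H → 𝒜)
    (inn_add_left : ∀ x y z : H, inn (x + y) z = inn x z + inn y z)
    (inn_smul_left : ∀ (a : 𝒜) (x z : H), inn (a • x) z = a * inn x z)
    (inn_conj_symm : ∀ x y : H, inn x y = star (inn y x))
    (inn_nonneg : ∀ x : H, 0 ≤ inn x x)
    (hnorm : ∀ x : H, ‖x‖ = Real.sqrt ‖inn x x‖)
    -- `(Ω, μ)` is a measure space
    [MeasurableSpace Ω] (μ : Measure Ω)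
    (X Y : Ω → H)
    (A B : ℝ) (hA : 0 < A) (hAB : A ≤ B)
    -- `(X, Y)` is a continuous biframe with bounds `A, B`
    (hframe : ∀ f : H,
      A • inn f f ≤ ∫ ω, inn f (X ω) * inn (Y ω) f ∂μ ∧
      ∫ ω, inn f (X ω) * inn (Y ω) f ∂μ ≤ B • inn f f)
    -- `T` is a bounded `𝒜`-linear operator with adjoint `Ts`
    (T Ts : H →L[ℝ] H)
    (hTadj : ∀ f g : H, inn (T f) g = inn f (Ts g))
    -- `T` is invertible with bounded inverse `Tinv`, whose adjoint is `Tinvs`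
    (Tinv Tinvs : H →L[ℝ] H)
    (hTinv₂ : ∀ x : H, T (Tinv x) = x)
    (hTinvadj : ∀ f g : H, inn (Tinv f) g = inn f (Tinvs g)) :
    ∀ f : H,
      (A / ‖Tinvs‖ ^ 2) • inn f f ≤ ∫ ω, inn f (T (X ω)) * inn (T (Y ω)) f ∂μ ∧
      ∫ ω, inn f (T (X ω)) * inn (T (Y ω)) f ∂μ ≤ (B * ‖Ts‖ ^ 2) • inn f f := by
  let _ : CStarAlgebra 𝒜 := CStarRing.toCStarAlgebra_s3
  have hinn : IsCStarInner inn := ⟨inn_add_left, inn_smul_left, inn_conj_symm, inn_nonneg, hnorm⟩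
  intro f
  set g := Ts f
  have hint : ∫ ω, inn f (T (X ω)) * inn (T (Y ω)) f ∂μ = ∫ ω, inn g (X ω) * inn (Y ω) g ∂μ := by
    congr 1 with ω
    rw [inn_conj_symm f, hTadj, ← inn_conj_symm, hTadj]
  have hg : inn g g ≤ ‖Ts‖ ^ 2 • inn f f := hinn.inn_map_self_le hTadj f
  have hf : inn f f ≤ ‖Tinvs‖ ^ 2 • inn g g := by
    simpa only [g, hinn.leftInverse_adjoint hTadj hTinvadj hTinv₂ f] using
      hinn.inn_map_self_le hTinvadj g
  rw [hint]
  exact ⟨(div_smul_le_smul_of_le_smul hA.le (by positivity) (inn_nonneg g) hf).trans (hframe g).1,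
    (hframe g).2.trans (by rw [mul_smul]; exact smul_le_smul_of_nonneg_left hg (hA.le.trans hAB))⟩

/-- If `T` is a bounded adjointable `𝒜`-linear operator, invertible with
bounded adjointable inverse, and `(X, Y)` is a continuous biframe with bounds `A, B`, then
`(T∘X, T∘Y)` is a continuous biframe with bounds `A·‖(T⁻¹)*‖⁻²` and `B·‖T*‖²`. -/
theorem continuous_biframe_map_invertible
    {𝒜 H Ω : Type*}
    -- `𝒜` is a unital C*-algebra
    [NormedRing 𝒜] [StarRing 𝒜] [CStarRing 𝒜] [NormedAlgebra ℂ 𝒜] [CompleteSpace 𝒜]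
    [PartialOrder 𝒜] [StarOrderedRing 𝒜]
    -- `H` is a Hilbert C*-module over `𝒜`
    [NormedAddCommGroup H] [NormedSpace ℝ H] [CompleteSpace H] [Module 𝒜 H]
    (inn : H → H → 𝒜)
    (inn_add_left : ∀ x y z : H, inn (x + y) z = inn x z + inn y z)
    (inn_smul_left : ∀ (a : 𝒜) (x z : H), inn (a • x) z = a * inn x z)
    (inn_conj_symm : ∀ x y : H, inn x y = star (inn y x))
    (inn_nonneg : ∀ x : H, 0 ≤ inn x x)
    (inn_definite : ∀ x : H, inn x x = 0 → x = 0)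
    (hnorm : ∀ x : H, ‖x‖ = Real.sqrt ‖inn x x‖)
    -- `(Ω, μ)` is a measure space
    [MeasurableSpace Ω] (μ : Measure Ω)
    -- `X, Y : Ω → H` are weakly measurable
    (X Y : Ω → H)
    (hXw : ∀ f : H, AEStronglyMeasurable (fun ω => inn f (X ω)) μ)
    (hYw : ∀ f : H, AEStronglyMeasurable (fun ω => inn f (Y ω)) μ)
    (A B : ℝ) (hA : 0 < A) (hAB : A ≤ B)
    -- `(X, Y)` is a continuous biframe with bounds `A, B`
    (hframe : ∀ f : H,
      A • inn f f ≤ ∫ ω, inn f (X ω) * inn (Y ω) f ∂μ ∧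
      ∫ ω, inn f (X ω) * inn (Y ω) f ∂μ ≤ B • inn f f)
    -- `T` is a bounded `𝒜`-linear operator with adjoint `Ts`
    (T Ts : H →L[ℝ] H)
    (hTmod : ∀ (a : 𝒜) (x : H), T (a • x) = a • T x)
    (hTadj : ∀ f g : H, inn (T f) g = inn f (Ts g))
    -- `T` is invertible with bounded inverse `Tinv`, whose adjoint is `Tinvs`
    (Tinv Tinvs : H →L[ℝ] H)
    (hTinv₁ : ∀ x : H, Tinv (T x) = x) (hTinv₂ : ∀ x : H, T (Tinv x) = x)
    (hTinvadj : ∀ f g : H, inn (Tinv f) g = inn f (Tinvs g))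
    -- all relevant integrands are Bochner integrable
    (hprod : ∀ f : H, Integrable (fun ω => inn f (X ω) * inn (Y ω) f) μ)
    (hprodT : ∀ f : H, Integrable (fun ω => inn f (T (X ω)) * inn (T (Y ω)) f) μ) :
    ∀ f : H,
      (A / ‖Tinvs‖ ^ 2) • inn f f ≤ ∫ ω, inn f (T (X ω)) * inn (T (Y ω)) f ∂μ ∧
      ∫ ω, inn f (T (X ω)) * inn (T (Y ω)) f ∂μ ≤ (B * ‖Ts‖ ^ 2) • inn f f :=
  continuous_biframe_map_invertible_general inn inn_add_left inn_smul_left inn_conj_symm inn_nonneg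
    hnorm μ X Y A B hA hAB hframe T Ts hTadj Tinv Tinvs hTinv₂ hTinvadj
end

section
/- Let (X, X) and (Y, Y) be continuous biframe Bessel mappings for H with Bessel bounds D₁ and D₂ respectively, and let m : Ω → ℂ be an essentially bounded measurable function. Then for all f, g ∈ H, ‖∫_Ω m(ω)·⟨f, X(ω)⟩⟨Y(ω), g⟩ dμ(ω)‖ ≤ ‖m‖_∞·√(D₁ D₂)·‖f‖·‖g‖; consequently the continuous biframe Bessel multiplier M_{m,X,Y} is a well-defined bounded operator with ‖M_{m,X,Y}‖ ≤ ‖m‖_∞·√(D₁ D₂). -/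
/-!
The argument is the Cauchy–Schwarz inequality for `𝒜`-valued integrals. Writing
`a ω = conj (m ω) • ⟨X ω, f⟩` and `b ω = ⟨Y ω, g⟩`, the integrand is `star (a ω) * b ω`, and
positivity of `∫ star (a d - b) * (a d - b)` for every `d : 𝒜` yields
`‖∫ star a * b‖² ≤ ‖∫ star a * a‖ · ‖∫ star b * b‖`. The Bessel bounds and `|m| ≤ ‖m‖_∞` bound
the two factors by `‖m‖_∞² D₁ ‖f‖²` and `D₂ ‖g‖²`; taking `g = M f` gives the operator bound.
-/

open MeasureTheory

section StarComplexSMul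

variable {A : Type*} [Ring A] [StarRing A] [Algebra ℂ A]

theorem star_algebraMap_I [PartialOrder A] [StarOrderedRing A] :
    star (algebraMap ℂ A Complex.I) = -algebraMap ℂ A Complex.I := by
  set j := algebraMap ℂ A Complex.I
  have hjj : j * j = -1 := by rw [← map_mul, Complex.I_mul_I, map_neg, map_one]
  have hjj' : star j * star j = -1 := by rw [← star_mul, hjj, star_neg, star_one]
  have hcomm : Commute j (star j) := Algebra.commute_algebraMap_left _ _
  have hu : j * star j * (j * star j) = 1 := by
    rw [hcomm.symm.mul_mul_mul_comm, hjj, hjj', neg_mul_neg, one_mul]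
  -- `2 (j * star j - 1)` and `2 (1 - j * star j)` are the squares of the self-adjoint elements
  -- `j + star j` and `j * star j - 1`, so `j * star j = 1`
  have h1 : 0 ≤ (j * star j + j * star j) - (1 + 1) := by
    have e : star (j + star j) * (j + star j) = (j * star j + j * star j) - (1 + 1) := by
      rw [star_add, star_star, add_mul, mul_add, mul_add, hjj, hjj', hcomm.symm.eq]
      abel
    exact e ▸ star_mul_self_nonneg (j + star j)
  have h2 : 0 ≤ (1 + 1) - (j * star j + j * star j) := by
    have e : star (j * star j - 1) * (j * star j - 1) = (1 + 1) - (j * star j + j * star j) := by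
      have hsq : (j * star j - 1) * (j * star j - 1)
          = j * star j * (j * star j) - (j * star j + j * star j) + 1 := by noncomm_ring
      rw [star_sub, star_one, star_mul, star_star, hsq, hu]
      abel
    exact e ▸ star_mul_self_nonneg (j * star j - 1)
  have hu1 : j * star j = 1 := by
    have h : (2 : ℂ) • (j * star j - 1) = 0 := by
      rw [two_smul, sub_add_sub_comm]
      exact sub_eq_zero.mpr (le_antisymm (sub_nonneg.mp h2) (sub_nonneg.mp h1))
    simpa [sub_eq_zero] using h
  calc star j = -(j * j) * star j := by rw [hjj, neg_neg, one_mul]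
    _ = -j := by rw [neg_mul, mul_assoc, hu1, mul_one]

theorem star_algebraMap_ofReal [TopologicalSpace A] [ContinuousStar A] [ContinuousSMul ℂ A]
    [T2Space A] (r : ℝ) : star (algebraMap ℂ A r) = algebraMap ℂ A r := by
  have hcont : Continuous fun s : ℝ => algebraMap ℂ A s :=
    (continuous_algebraMap ℂ A).comp Complex.continuous_ofReal
  refine congrFun (Continuous.ext_on Rat.denseRange_cast hcont.star hcont ?_) r
  rintro _ ⟨q, rfl⟩
  simp only [Complex.ofReal_ratCast, Algebra.algebraMap_eq_smul_one, star_ratCast_smul, star_one]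

theorem starModule_complex_of_starOrderedRing [PartialOrder A] [StarOrderedRing A]
    [TopologicalSpace A] [ContinuousStar A] [ContinuousSMul ℂ A] [T2Space A] :
    StarModule ℂ A where
  star_smul c a := by
    have hc : star (algebraMap ℂ A c) = algebraMap ℂ A (star c) := by
      conv_lhs => rw [← Complex.re_add_im c]
      simp only [map_add, map_mul, star_add, star_mul, star_algebraMap_ofReal, star_algebraMap_I]
      rw [← map_neg, ← map_mul, ← map_add]
      congr 1
      apply Complex.ext <;> simp
    rw [Algebra.smul_def, Algebra.smul_def, star_mul, hc, Algebra.commutes]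

end StarComplexSMul

theorem ae_norm_le_toReal_eLpNormEssSup {Ω E : Type*} [MeasurableSpace Ω] {μ : Measure Ω}
    [NormedAddCommGroup E] {f : Ω → E} (hf : eLpNormEssSup f μ ≠ ⊤) :
    ∀ᵐ ω ∂μ, ‖f ω‖ ≤ (eLpNormEssSup f μ).toReal := by
  filter_upwards [ae_le_eLpNormEssSup (f := f) (μ := μ)] with ω hω
  simpa using ENNReal.toReal_mono hf hω

section IntegralStar

variable {Ω E : Type*} [MeasurableSpace Ω] {μ : Measure Ω} [NormedAddCommGroup E]
  [NormedSpace ℝ E] [StarAddMonoid E] [ContinuousStar E] [StarModule ℝ E]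

theorem MeasureTheory.Integrable.star {f : Ω → E} (hf : Integrable f μ) :
    Integrable (fun ω => star (f ω)) μ :=
  (starL' ℝ : E ≃L[ℝ] E).toContinuousLinearMap.integrable_comp hf

theorem MeasureTheory.integral_star (f : Ω → E) :
    ∫ ω, star (f ω) ∂μ = star (∫ ω, f ω ∂μ) :=
  (starL' ℝ : E ≃L[ℝ] E).integral_comp_comm f

end IntegralStar

section CauchySchwarz

open Filter Topology

variable {A : Type*} [CStarAlgebra A] [PartialOrder A] [StarOrderedRing A]

theorem norm_le_mul_norm_of_le_smul {a b : A} {D : ℝ} (ha : 0 ≤ a) (hab : a ≤ D • b)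
    (hD : 0 ≤ D) : ‖a‖ ≤ D * ‖b‖ := by
  simpa only [norm_smul, Real.norm_of_nonneg hD] using
    CStarAlgebra.norm_le_norm_of_nonneg_of_le ha hab

theorem norm_sq_le_of_forall_nonneg {P Q c : A} (hP : IsSelfAdjoint P)
    (h : ∀ d : A, 0 ≤ star d * P * d - star d * c - star c * d + Q) :
    ‖c‖ ^ 2 ≤ ‖P‖ * ‖Q‖ := by
  have hcc : 0 ≤ star c * c := star_mul_self_nonneg c
  have hscale : ∀ t : ℝ, 0 < t → t * ‖P‖ ≤ 1 → t * ‖c‖ ^ 2 ≤ ‖Q‖ := by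
    intro t ht htP
    have hd : 0 ≤ t ^ 2 • (‖P‖ • (star c * c)) - (2 * t) • (star c * c) + Q := by
      have e : star (t • c) * P * (t • c) - star (t • c) * c - star c * (t • c) + Q
          = t ^ 2 • (star c * P * c) - (2 * t) • (star c * c) + Q := by
        simp only [star_smul, star_trivial, smul_mul_assoc, mul_smul_comm]
        module
      refine ((h (t • c)).trans_eq e).trans ?_
      gcongr
      exact CStarAlgebra.star_left_conjugate_le_norm_smul
    have hle : t • (star c * c) ≤ Q := calc
      t • (star c * c) ≤ (2 * t - t ^ 2 * ‖P‖) • (star c * c) :=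
        smul_le_smul_of_nonneg_right (by nlinarith) hcc
      _ ≤ Q := by
        rw [← sub_nonneg]
        convert hd using 1
        module
    have hnorm := CStarAlgebra.norm_le_norm_of_nonneg_of_le (smul_nonneg ht.le hcc) hle
    rwa [norm_smul, Real.norm_of_nonneg ht.le, CStarRing.norm_star_mul_self, ← sq] at hnorm
  -- `t = (‖P‖ + ε)⁻¹` rather than `‖P‖⁻¹`, so that `P = 0` is no separate case
  have hε : ∀ ε > 0, ‖c‖ ^ 2 ≤ (‖P‖ + ε) * ‖Q‖ := by
    intro ε hε
    have hpos : 0 < ‖P‖ + ε := by positivity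
    have := hscale (‖P‖ + ε)⁻¹ (inv_pos.2 hpos) (by rw [inv_mul_le_iff₀ hpos]; linarith)
    rwa [inv_mul_le_iff₀ hpos] at this
  have hlim : Tendsto (fun ε => (‖P‖ + ε) * ‖Q‖) (𝓝[>] 0) (𝓝 (‖P‖ * ‖Q‖)) := by
    have hcont : Continuous fun ε : ℝ => (‖P‖ + ε) * ‖Q‖ := by fun_prop
    simpa using (hcont.tendsto 0).mono_left nhdsWithin_le_nhds
  exact ge_of_tendsto hlim (eventually_nhdsWithin_of_forall hε)

variable {Ω : Type*} [MeasurableSpace Ω] {μ : Measure Ω}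

theorem norm_integral_star_mul_sq_le {a b : Ω → A}
    (ha : Integrable (fun ω => star (a ω) * a ω) μ)
    (hb : Integrable (fun ω => star (b ω) * b ω) μ)
    (hab : Integrable (fun ω => star (a ω) * b ω) μ) :
    ‖∫ ω, star (a ω) * b ω ∂μ‖ ^ 2
      ≤ ‖∫ ω, star (a ω) * a ω ∂μ‖ * ‖∫ ω, star (b ω) * b ω ∂μ‖ := by
  refine norm_sq_le_of_forall_nonneg
    (integral_nonneg fun ω => star_mul_self_nonneg _).isSelfAdjoint fun d => ?_
  have hexp : ∀ ω, star (a ω * d - b ω) * (a ω * d - b ω) = star d * (star (a ω) * a ω) * d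
      - star d * (star (a ω) * b ω) - star (star (a ω) * b ω) * d + star (b ω) * b ω := by
    intro ω
    simp only [star_sub, star_mul, star_star]
    noncomm_ring
  have h1 := (ha.const_mul (star d)).mul_const d
  have h2 := hab.const_mul (star d)
  have h3 := hab.star.mul_const d
  calc (0 : A) ≤ ∫ ω, star (a ω * d - b ω) * (a ω * d - b ω) ∂μ :=
        integral_nonneg fun ω => star_mul_self_nonneg _
    _ = _ := by
      simp only [hexp]
      rw [integral_add _ hb, integral_sub _ h3, integral_sub h1 h2,
        integral_mul_const_of_integrable (ha.const_mul _), integral_const_mul_of_integrable ha,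
        integral_const_mul_of_integrable hab, integral_mul_const_of_integrable hab.star,
        integral_star]
      exacts [h1.sub h2, (h1.sub h2).sub h3]

theorem norm_integral_smul_le {p : Ω → A} {w : Ω → ℝ} {K : ℝ} (hp : Integrable p μ)
    (hp0 : ∀ ω, 0 ≤ p ω) (hw : AEStronglyMeasurable w μ) (hw0 : ∀ ω, 0 ≤ w ω)
    (hwK : ∀ᵐ ω ∂μ, w ω ≤ K) (hK : 0 ≤ K) :
    ‖∫ ω, w ω • p ω ∂μ‖ ≤ K * ‖∫ ω, p ω ∂μ‖ := by
  have hwp : Integrable (fun ω => w ω • p ω) μ :=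
    hp.bdd_smul (𝕜 := ℝ) K hw (hwK.mono fun ω h => by rwa [Real.norm_of_nonneg (hw0 ω)])
  have hle : ∫ ω, w ω • p ω ∂μ ≤ K • ∫ ω, p ω ∂μ := by
    rw [← integral_smul]
    exact integral_mono_ae hwp (hp.smul K)
      (hwK.mono fun ω h => smul_le_smul_of_nonneg_right h (hp0 ω))
  exact norm_le_mul_norm_of_le_smul (integral_nonneg fun ω => smul_nonneg (hw0 ω) (hp0 ω)) hle hK

theorem norm_integral_smul_star_mul_sq_le {u v : Ω → A} {m : Ω → ℂ} {C : ℝ}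
    (hu : Integrable (fun ω => star (u ω) * u ω) μ)
    (hv : Integrable (fun ω => star (v ω) * v ω) μ)
    (huv : Integrable (fun ω => m ω • (star (u ω) * v ω)) μ) (hm : AEStronglyMeasurable m μ)
    (hmC : ∀ᵐ ω ∂μ, ‖m ω‖ ≤ C) :
    ‖∫ ω, m ω • (star (u ω) * v ω) ∂μ‖ ^ 2
      ≤ C ^ 2 * ‖∫ ω, star (u ω) * u ω ∂μ‖ * ‖∫ ω, star (v ω) * v ω ∂μ‖ := by
  set a : Ω → A := fun ω => star (m ω) • u ω
  have hab : ∀ ω, star (a ω) * v ω = m ω • (star (u ω) * v ω) := fun ω => by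
    simp only [a, star_smul, star_star, smul_mul_assoc]
  have haa : ∀ ω, star (a ω) * a ω = (‖m ω‖ ^ 2) • (star (u ω) * u ω) := fun ω => by
    simp only [a, star_smul, star_star, smul_mul_assoc, mul_smul_comm, smul_smul]
    rw [Complex.star_def, Complex.conj_mul', ← Complex.ofReal_pow, Complex.coe_smul]
  have hw : AEStronglyMeasurable (fun ω => ‖m ω‖ ^ 2) μ := hm.norm.pow 2
  have hwC : ∀ᵐ ω ∂μ, ‖m ω‖ ^ 2 ≤ C ^ 2 :=
    hmC.mono fun ω h => pow_le_pow_left₀ (norm_nonneg _) h 2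
  have haa_int : Integrable (fun ω => star (a ω) * a ω) μ := by
    simp only [haa]
    exact hu.bdd_smul (𝕜 := ℝ) (C ^ 2) hw (hwC.mono fun ω h => by simpa using h)
  have hP : ‖∫ ω, star (a ω) * a ω ∂μ‖ ≤ C ^ 2 * ‖∫ ω, star (u ω) * u ω ∂μ‖ := by
    simp only [haa]
    exact norm_integral_smul_le hu (fun ω => star_mul_self_nonneg _) hw
      (fun ω => by positivity) hwC (sq_nonneg C)
  have hcs := norm_integral_star_mul_sq_le haa_int hv (by simpa only [hab] using huv)
  simp only [hab] at hcs
  exact hcs.trans (mul_le_mul_of_nonneg_right hP (norm_nonneg _))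

end CauchySchwarz

theorem bessel_multiplier_bounded_general
    {𝒜 H Ω : Type*}
    -- `𝒜` is a unital C*-algebra
    [NormedRing 𝒜] [StarRing 𝒜] [CStarRing 𝒜] [NormedAlgebra ℂ 𝒜] [CompleteSpace 𝒜]
    [PartialOrder 𝒜] [StarOrderedRing 𝒜]
    -- `H` is a Hilbert C*-module over `𝒜`
    [NormedAddCommGroup H]
    (inn : H → H → 𝒜)
    (inn_conj_symm : ∀ x y : H, inn x y = star (inn y x))
    (hnorm : ∀ x : H, ‖x‖ = Real.sqrt ‖inn x x‖)
    -- `(Ω, μ)` is a measure space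
    [MeasurableSpace Ω] (μ : Measure Ω)
    (X Y : Ω → H)
    -- `(X, X)` and `(Y, Y)` are continuous biframe Bessel mappings with bounds `D₁, D₂`
    (D₁ D₂ : ℝ) (hD₁ : 0 < D₁) (hD₂ : 0 < D₂)
    (hXBessel : ∀ f : H, ∫ ω, inn f (X ω) * inn (X ω) f ∂μ ≤ D₁ • inn f f)
    (hYBessel : ∀ f : H, ∫ ω, inn f (Y ω) * inn (Y ω) f ∂μ ≤ D₂ • inn f f)
    -- `m : Ω → ℂ` is an essentially bounded measurable function
    (m : Ω → ℂ) (hm : AEStronglyMeasurable m μ) (hmbd : eLpNormEssSup m μ ≠ ⊤)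
    -- all relevant integrands are Bochner integrable
    (hprodX : ∀ f : H, Integrable (fun ω => inn f (X ω) * inn (X ω) f) μ)
    (hprodY : ∀ f : H, Integrable (fun ω => inn f (Y ω) * inn (Y ω) f) μ)
    (hmint : ∀ f g : H, Integrable (fun ω => m ω • (inn f (X ω) * inn (Y ω) g)) μ)
    -- the continuous biframe Bessel multiplier `M_{m,X,Y}` (weakly defined)
    (M : H → H)
    (hM : ∀ f g : H, inn (M f) g = ∫ ω, m ω • (inn f (X ω) * inn (Y ω) g) ∂μ) :
    (∀ f g : H,
      ‖∫ ω, m ω • (inn f (X ω) * inn (Y ω) g) ∂μ‖ ≤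
        (eLpNormEssSup m μ).toReal * Real.sqrt (D₁ * D₂) * ‖f‖ * ‖g‖) ∧
    (∀ f : H, ‖M f‖ ≤ (eLpNormEssSup m μ).toReal * Real.sqrt (D₁ * D₂) * ‖f‖) := by
  let : StarModule ℂ 𝒜 := starModule_complex_of_starOrderedRing
  let : CStarAlgebra 𝒜 := {}
  have hstar (x y : H) : star (inn x y) = inn y x := by rw [inn_conj_symm x y, star_star]
  have hsq (x : H) : ‖inn x x‖ = ‖x‖ ^ 2 := by rw [hnorm, Real.sq_sqrt (norm_nonneg _)]
  set C := (eLpNormEssSup m μ).toReal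
  have hmC : ∀ᵐ ω ∂μ, ‖m ω‖ ≤ C := ae_norm_le_toReal_eLpNormEssSup hmbd
  have hBessel {Z : Ω → H} {D : ℝ} (hD : 0 < D)
      (hZ : ∀ f, ∫ ω, inn f (Z ω) * inn (Z ω) f ∂μ ≤ D • inn f f) (f : H) :
      ‖∫ ω, inn f (Z ω) * inn (Z ω) f ∂μ‖ ≤ D * ‖f‖ ^ 2 := by
    rw [← hsq]
    have h0 (ω : Ω) : 0 ≤ inn f (Z ω) * inn (Z ω) f := by
      simpa only [hstar] using star_mul_self_nonneg (inn (Z ω) f)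
    exact norm_le_mul_norm_of_le_smul (integral_nonneg h0) (hZ f) hD.le
  have hbound (f g : H) :
      ‖∫ ω, m ω • (inn f (X ω) * inn (Y ω) g) ∂μ‖ ≤ C * √(D₁ * D₂) * ‖f‖ * ‖g‖ := by
    have hcs := norm_integral_smul_star_mul_sq_le (u := fun ω => inn (X ω) f)
      (v := fun ω => inn (Y ω) g) (by simpa only [hstar] using hprodX f)
      (by simpa only [hstar] using hprodY g) (by simpa only [hstar] using hmint f g) hm hmC
    simp only [hstar] at hcs
    refine (pow_le_pow_iff_left₀ (norm_nonneg _) (by positivity) two_ne_zero).1 (hcs.trans ?_)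
    calc C ^ 2 * _ * _ ≤ C ^ 2 * (D₁ * ‖f‖ ^ 2) * (D₂ * ‖g‖ ^ 2) := by
          gcongr
          exacts [hBessel hD₁ hXBessel f, hBessel hD₂ hYBessel g]
      _ = (C * √(D₁ * D₂) * ‖f‖ * ‖g‖) ^ 2 := by
          rw [mul_pow, mul_pow, mul_pow, Real.sq_sqrt (by positivity)]
          ring
  refine ⟨hbound, fun f => ?_⟩
  have h := hbound f (M f)
  rw [← hM, hsq] at h
  have hK : 0 ≤ C * √(D₁ * D₂) * ‖f‖ := by positivity
  nlinarith [norm_nonneg (M f)]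

/-- The continuous biframe Bessel multiplier `M_{m,X,Y}` is well defined and
bounded, with `‖M_{m,X,Y}‖ ≤ ‖m‖_∞ · √(D₁ D₂)`. -/
theorem bessel_multiplier_bounded
    {𝒜 H Ω : Type*}
    -- `𝒜` is a unital C*-algebra
    [NormedRing 𝒜] [StarRing 𝒜] [CStarRing 𝒜] [NormedAlgebra ℂ 𝒜] [CompleteSpace 𝒜]
    [PartialOrder 𝒜] [StarOrderedRing 𝒜]
    -- `H` is a Hilbert C*-module over `𝒜`
    [NormedAddCommGroup H] [NormedSpace ℝ H] [CompleteSpace H] [Module 𝒜 H]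
    (inn : H → H → 𝒜)
    (inn_add_left : ∀ x y z : H, inn (x + y) z = inn x z + inn y z)
    (inn_smul_left : ∀ (a : 𝒜) (x z : H), inn (a • x) z = a * inn x z)
    (inn_conj_symm : ∀ x y : H, inn x y = star (inn y x))
    (inn_nonneg : ∀ x : H, 0 ≤ inn x x)
    (inn_definite : ∀ x : H, inn x x = 0 → x = 0)
    (hnorm : ∀ x : H, ‖x‖ = Real.sqrt ‖inn x x‖)
    -- `(Ω, μ)` is a measure space
    [MeasurableSpace Ω] (μ : Measure Ω)
    -- `X, Y : Ω → H` are weakly measurable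
    (X Y : Ω → H)
    (hXw : ∀ f : H, AEStronglyMeasurable (fun ω => inn f (X ω)) μ)
    (hYw : ∀ f : H, AEStronglyMeasurable (fun ω => inn f (Y ω)) μ)
    -- `(X, X)` and `(Y, Y)` are continuous biframe Bessel mappings with bounds `D₁, D₂`
    (D₁ D₂ : ℝ) (hD₁ : 0 < D₁) (hD₂ : 0 < D₂)
    (hXBessel : ∀ f : H, ∫ ω, inn f (X ω) * inn (X ω) f ∂μ ≤ D₁ • inn f f)
    (hYBessel : ∀ f : H, ∫ ω, inn f (Y ω) * inn (Y ω) f ∂μ ≤ D₂ • inn f f)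
    -- `m : Ω → ℂ` is an essentially bounded measurable function
    (m : Ω → ℂ) (hm : AEStronglyMeasurable m μ) (hmbd : eLpNormEssSup m μ ≠ ⊤)
    -- all relevant integrands are Bochner integrable
    (hprodX : ∀ f : H, Integrable (fun ω => inn f (X ω) * inn (X ω) f) μ)
    (hprodY : ∀ f : H, Integrable (fun ω => inn f (Y ω) * inn (Y ω) f) μ)
    (hmint : ∀ f g : H, Integrable (fun ω => m ω • (inn f (X ω) * inn (Y ω) g)) μ)
    -- the continuous biframe Bessel multiplier `M_{m,X,Y}` (weakly defined)
    (M : H → H)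
    (hM : ∀ f g : H, inn (M f) g = ∫ ω, m ω • (inn f (X ω) * inn (Y ω) g) ∂μ) :
    (∀ f g : H,
      ‖∫ ω, m ω • (inn f (X ω) * inn (Y ω) g) ∂μ‖ ≤
        (eLpNormEssSup m μ).toReal * Real.sqrt (D₁ * D₂) * ‖f‖ * ‖g‖) ∧
    (∀ f : H, ‖M f‖ ≤ (eLpNormEssSup m μ).toReal * Real.sqrt (D₁ * D₂) * ‖f‖) :=
  bessel_multiplier_bounded_general inn inn_conj_symm hnorm μ X Y D₁ D₂ hD₁ hD₂ hXBessel hYBessel m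
    hm hmbd hprodX hprodY hmint M hM
end

section
/- Let (X, Y) be a continuous biframe for H whose continuous biframe operator S = S_{X,Y} is self-adjoint and invertible with bounded adjointable inverse S⁻¹. Then every f ∈ H has the reconstruction formulas f = ∫_Ω ⟨f, S⁻¹X(ω)⟩·Y(ω) dμ(ω) and f = ∫_Ω ⟨f, X(ω)⟩·S⁻¹Y(ω) dμ(ω) (Bochner integrals). -/
open MeasureTheory

/-- If the biframe operator `S = S_{X,Y}` of a continuous biframe `(X, Y)`
is self-adjoint and invertible with bounded adjointable inverse, then every `f` satisfies
`f = ∫ ⟨f, S⁻¹X(ω)⟩ • Y(ω) dμ` and `f = ∫ ⟨f, X(ω)⟩ • S⁻¹Y(ω) dμ`. -/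
theorem biframe_reconstruction
    {𝒜 H Ω : Type*}
    -- `𝒜` is a unital C*-algebra
    [NormedRing 𝒜] [StarRing 𝒜] [CStarRing 𝒜] [NormedAlgebra ℂ 𝒜] [CompleteSpace 𝒜]
    [PartialOrder 𝒜] [StarOrderedRing 𝒜]
    -- `H` is a Hilbert C*-module over `𝒜`
    [NormedAddCommGroup H] [NormedSpace ℝ H] [CompleteSpace H] [Module 𝒜 H]
    (inn : H → H → 𝒜)
    (inn_add_left : ∀ x y z : H, inn (x + y) z = inn x z + inn y z)
    (inn_smul_left : ∀ (a : 𝒜) (x z : H), inn (a • x) z = a * inn x z)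
    (inn_conj_symm : ∀ x y : H, inn x y = star (inn y x))
    (inn_nonneg : ∀ x : H, 0 ≤ inn x x)
    (inn_definite : ∀ x : H, inn x x = 0 → x = 0)
    (hnorm : ∀ x : H, ‖x‖ = Real.sqrt ‖inn x x‖)
    -- `(Ω, μ)` is a measure space
    [MeasurableSpace Ω] (μ : Measure Ω)
    -- `X, Y : Ω → H` are weakly measurable
    (X Y : Ω → H)
    (hXw : ∀ f : H, AEStronglyMeasurable (fun ω => inn f (X ω)) μ)
    (hYw : ∀ f : H, AEStronglyMeasurable (fun ω => inn f (Y ω)) μ)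
    (A B : ℝ) (hA : 0 < A) (hAB : A ≤ B)
    -- `(X, Y)` is a continuous biframe with bounds `A, B`
    (hframe : ∀ f : H,
      A • inn f f ≤ ∫ ω, inn f (X ω) * inn (Y ω) f ∂μ ∧
      ∫ ω, inn f (X ω) * inn (Y ω) f ∂μ ≤ B • inn f f)
    -- the continuous biframe operator `S = S_{X,Y}` (Bochner integral)
    (hXYint : ∀ f : H, Integrable (fun ω => inn f (X ω) • Y ω) μ)
    (S : H → H)
    (hS : ∀ f : H, S f = ∫ ω, inn f (X ω) • Y ω ∂μ)
    -- `S` is self-adjoint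
    (hSsa : ∀ f g : H, inn (S f) g = inn f (S g))
    -- `S` is invertible with bounded adjointable inverse `Sinv`
    (Sinv : H → H) (hSinvc : Continuous Sinv)
    (hSinv₁ : ∀ f : H, Sinv (S f) = f) (hSinv₂ : ∀ f : H, S (Sinv f) = f)
    (Sinvs : H → H)
    (hSinvadj : ∀ f g : H, inn (Sinv f) g = inn f (Sinvs g))
    (hrint : ∀ f : H, Integrable (fun ω => inn f (Sinv (X ω)) • Y ω) μ)
    (hrint' : ∀ f : H, Integrable (fun ω => inn f (X ω) • Sinv (Y ω)) μ) :
    ∀ f : H,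
      f = ∫ ω, inn f (Sinv (X ω)) • Y ω ∂μ ∧
      f = ∫ ω, inn f (X ω) • Sinv (Y ω) ∂μ := by
  -- basic facts about `inn`
  have inn_zero_left : ∀ z : H, inn 0 z = 0 := by
    intro z
    have h := inn_add_left 0 0 z
    simpa using h.symm
  have inn_zero_right : ∀ z : H, inn z 0 = 0 := by
    intro z
    rw [inn_conj_symm, inn_zero_left, star_zero]
  have inn_add_right : ∀ x y z : H, inn z (x + y) = inn z x + inn z y := by
    intro x y z
    rw [inn_conj_symm, inn_add_left, star_add, ← inn_conj_symm, ← inn_conj_symm]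
  -- weak nondegeneracy
  have weak_eq : ∀ x y : H, (∀ h : H, inn x h = inn y h) → x = y := by
    intro x y hxy
    have hneg : ∀ (u h : H), inn (-u) h = - inn u h := by
      intro u h
      have h2 := inn_add_left u (-u) h
      simp only [add_neg_cancel, inn_zero_left] at h2
      exact (eq_neg_of_add_eq_zero_right h2.symm)
    have key : ∀ h : H, inn (x + -y) h = 0 := by
      intro h
      rw [inn_add_left, hneg, hxy h, add_neg_cancel]
    have hz : x + -y = 0 := inn_definite _ (key _)
    exact eq_of_sub_eq_zero (by simpa [sub_eq_add_neg] using hz)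
  -- `Sinv` is self-adjoint w.r.t. `inn`
  have hSinv_sa : ∀ f g : H, inn (Sinv f) g = inn f (Sinv g) := by
    intro u v
    calc inn (Sinv u) v = inn (Sinv u) (S (Sinv v)) := by rw [hSinv₂]
      _ = inn (S (Sinv u)) (Sinv v) := (hSsa _ _).symm
      _ = inn u (Sinv v) := by rw [hSinv₂]
  -- `Sinv` is additive
  have hSinv_add : ∀ x y : H, Sinv (x + y) = Sinv x + Sinv y := by
    intro x y
    apply weak_eq
    intro h
    rw [hSinvadj, inn_add_left, inn_add_left, hSinvadj, hSinvadj]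
  -- `Sinv` is `𝒜`-linear
  have hSinv_smul : ∀ (a : 𝒜) (x : H), Sinv (a • x) = a • Sinv x := by
    intro a x
    apply weak_eq
    intro h
    rw [hSinvadj, inn_smul_left, inn_smul_left, hSinvadj]
  -- package `Sinv` as a continuous ℝ-linear map
  let Sinv' : H →+ H := AddMonoidHom.mk' Sinv hSinv_add
  let L : H →L[ℝ] H := Sinv'.toRealLinearMap hSinvc
  have hL : ∀ x : H, L x = Sinv x := fun x => congrFun (Sinv'.coe_toRealLinearMap hSinvc) x
  intro f
  constructor
  · -- first reconstruction formula
    calc f = S (Sinv f) := (hSinv₂ f).symm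
      _ = ∫ ω, inn (Sinv f) (X ω) • Y ω ∂μ := hS _
      _ = ∫ ω, inn f (Sinv (X ω)) • Y ω ∂μ := by
          congr 1; funext ω; rw [hSinv_sa]
  · -- second reconstruction formula
    calc f = Sinv (S f) := (hSinv₁ f).symm
      _ = L (∫ ω, inn f (X ω) • Y ω ∂μ) := by rw [hL, hS]
      _ = ∫ ω, L (inn f (X ω) • Y ω) ∂μ := (L.integral_comp_comm (hXYint f)).symm
      _ = ∫ ω, inn f (X ω) • Sinv (Y ω) ∂μ := by
          congr 1; funext ω; rw [hL, hSinv_smul]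
end
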